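/- For every positive short root β ∈ Φ_sh ∩ Φ⁺, the length of the reflection s_β satisfies l(s_β) = 2·ht(β) − 1. -/

import Mathlib

open scoped RealInnerProductSpace Classical

noncomputable section

variable {V : Type} [NormedAddCommGroup V] [InnerProductSpace ℝ V] [FiniteDimensional ℝ V]

/-- The orthogonal reflection of `V` in the hyperplane orthogonal to `α`
(the reflection `s_α` when `α` is a root). -/
def sref (α : V) : V ≃ₗᵢ[ℝ] V := Submodule.reflection (Submodule.span ℝ {α})ᗮ

/-- The pairing `⟨β, γ∨⟩ = 2(β|γ)/(γ|γ)` of a vector with the coroot of `γ`. -/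
def cpair (β γ : V) : ℝ := 2 * ⟪β, γ⟫ / ⟪γ, γ⟫

/-- An irreducible reduced (crystallographic) root system in the real inner product
space `V`, the inner product being invariant under the Weyl group (automatic, since
reflections are isometries), normalized so that the shortest roots have squared length `1`. -/
structure NRootSystem (V : Type) [NormedAddCommGroup V] [InnerProductSpace ℝ V]
    [FiniteDimensional ℝ V] where
  Φ : Finset V
  nonempty : Φ.Nonempty
  zero_not_mem : (0 : V) ∉ Φ
  span_eq_top : Submodule.span ℝ (Φ : Set V) = ⊤
  reduced : ∀ α ∈ Φ, ∀ t : ℝ, t • α ∈ Φ → t = 1 ∨ t = -1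
  pairing_int : ∀ α ∈ Φ, ∀ β ∈ Φ, ∃ n : ℤ, 2 * ⟪β, α⟫ = n * ⟪α, α⟫
  reflect_mem : ∀ α ∈ Φ, ∀ β ∈ Φ, sref α β ∈ Φ
  irreducible : ∀ S : Finset V, S ⊆ Φ → S.Nonempty → (Φ \ S).Nonempty →
    ∃ α ∈ S, ∃ β ∈ Φ \ S, ⟪α, β⟫ ≠ 0
  norm_one_le : ∀ α ∈ Φ, 1 ≤ ⟪α, α⟫
  exists_norm_one : ∃ α ∈ Φ, ⟪α, α⟫ = 1

namespace NRootSystem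

variable (R : NRootSystem V)

/-- `r`, the maximal squared length of a root. -/
def r : ℝ := R.Φ.sup' R.nonempty fun α => ⟪α, α⟫

/-- long roots -/
def IsLong (α : V) : Prop := α ∈ R.Φ ∧ ⟪α, α⟫ = R.r

/-- short roots -/
def IsShort (α : V) : Prop := α ∈ R.Φ ∧ ⟪α, α⟫ < R.r

/-- The Weyl group `W`, generated by the reflections in the roots. -/
def Weyl : Subgroup (V ≃ₗᵢ[ℝ] V) := Subgroup.closure (sref '' (R.Φ : Set V))

end NRootSystem

/-- The standard parabolic subgroup `W_I` generated by the reflections in `I ⊆ Δ`. -/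
def WeylP (I : Finset V) : Subgroup (V ≃ₗᵢ[ℝ] V) := Subgroup.closure (sref '' (I : Set V))

/-- A base (set of simple roots) `Δ` of the root system, together with the
integral coordinates `coeff γ α` of each root `γ` in the basis `Δ`; every root is a
nonnegative or a nonpositive integral combination of the simple roots. -/
structure Base {V : Type} [NormedAddCommGroup V] [InnerProductSpace ℝ V]
    [FiniteDimensional ℝ V] (R : NRootSystem V) where
  Δ : Finset V
  subset : Δ ⊆ R.Φ
  indep : LinearIndependent ℝ (fun a : {x : V // x ∈ Δ} => (a : V))
  coeff : V → V → ℤ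
  coeff_spec : ∀ γ ∈ R.Φ, γ = ∑ α ∈ Δ, (coeff γ α : ℝ) • α
  coeff_sign : ∀ γ ∈ R.Φ, (∀ α ∈ Δ, 0 ≤ coeff γ α) ∨ (∀ α ∈ Δ, coeff γ α ≤ 0)

namespace Base

variable {R : NRootSystem V} (B : Base R)

/-- positive roots -/
def IsPos (γ : V) : Prop := γ ∈ R.Φ ∧ ∀ α ∈ B.Δ, 0 ≤ B.coeff γ α

/-- negative roots -/
def IsNeg (γ : V) : Prop := γ ∈ R.Φ ∧ ∀ α ∈ B.Δ, B.coeff γ α ≤ 0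

/-- the height of a root -/
def ht (γ : V) : ℤ := ∑ α ∈ B.Δ, B.coeff γ α

/-- the dual height `ht∨ γ = ht (γ∨)`: the height of the coroot `γ∨ = 2γ/(γ|γ)`
with respect to the basis of simple coroots `α∨ = 2α/(α|α)`, `α ∈ Δ`. -/
def htv (γ : V) : ℝ := ∑ α ∈ B.Δ, (B.coeff γ α : ℝ) * ⟪α, α⟫ / ⟪γ, γ⟫

/-- The length of `w`: the minimal length of an expression of `w` as a product of
simple reflections. -/
def len (w : V ≃ₗᵢ[ℝ] V) : ℕ :=
  sInf {n | ∃ g : Fin n → V, (∀ i, g i ∈ B.Δ) ∧ w = (List.ofFn fun i => sref (g i)).prod}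

/-- `w` is the longest element of the subgroup `H`. -/
def IsLongest (H : Subgroup (V ≃ₗᵢ[ℝ] V)) (w : V ≃ₗᵢ[ℝ] V) : Prop :=
  w ∈ H ∧ ∀ u ∈ H, B.len u ≤ B.len w

/-- `X_I = {w ∈ W | w(Φ_I⁺) ⊆ Φ⁺}`, the set of minimal length coset
representatives of `W/W_I`. -/
def XI (I : Finset V) : Set (V ≃ₗᵢ[ℝ] V) :=
  {w | w ∈ R.Weyl ∧
    ∀ γ, γ ∈ R.Φ → γ ∈ Submodule.span ℝ (I : Set V) → B.IsPos γ → B.IsPos (w γ)}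

/-- `h` is the highest root. -/
def IsHighest (h : V) : Prop :=
  h ∈ R.Φ ∧ ∀ γ ∈ R.Φ, ∀ α ∈ B.Δ, B.coeff γ α ≤ B.coeff h α

/-- `Ĩ = {α ∈ Δ | (h|α) = 0}`, the simple roots orthogonal to the highest root `h`. -/
def Itil (h : V) : Finset V := B.Δ.filter fun α => ⟪h, α⟫ = 0

/-- The level `L(α)` of a long root `α`, where `h` is the highest root:
`L(α) = ht∨(h) − ht∨(α)` if `α > 0` and `L(α) = ht∨(h) − ht∨(α) − 1` if `α < 0`. -/
def level (h α : V) : ℝ :=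
  if B.IsPos α then B.htv h - B.htv α else B.htv h - B.htv α - 1

/-- The elementary step relation `β →_γ α` on long roots (`γ` a positive root):
`α = s_γ(β)` and `L(α) = L(β) + 1`. -/
def Step (h γ β α : V) : Prop :=
  R.IsLong β ∧ R.IsLong α ∧ B.IsPos γ ∧ α = sref γ β ∧
    B.level h α = B.level h β + 1

/-- `g` is the sequence of positive roots of a path
`β = β₀ →_{g 0} β₁ →_{g 1} ⋯ →_{g (n-1)} β_n = α` from `β` to `α`. -/
def IsPathWord (h : V) {n : ℕ} (g : Fin n → V) (β α : V) : Prop :=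
  ∃ c : Fin (n + 1) → V, c 0 = β ∧ c (Fin.last n) = α ∧
    ∀ i : Fin n, B.Step h (g i) (c i.castSucc) (c i.succ)

/-- a path all of whose steps use simple roots -/
def IsSimplePathWord (h : V) {n : ℕ} (g : Fin n → V) (β α : V) : Prop :=
  B.IsPathWord h g β α ∧ ∀ i, g i ∈ B.Δ

/-- there is a path from `β` to `α`, i.e. `α ⪯ β` -/
def HasPath (h β α : V) : Prop := ∃ (n : ℕ) (g : Fin n → V), B.IsPathWord h g β α

/-- there is a simple path from `β` to `α` -/
def HasSimplePath (h β α : V) : Prop :=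
  ∃ (n : ℕ) (g : Fin n → V), B.IsSimplePathWord h g β α

/-- The covering relation `w →_γ w'` for the Bruhat order:
`w' = s_γ w` and `l(w') = l(w) + 1`, for a positive root `γ`. -/
def BStep (γ : V) (w w' : V ≃ₗᵢ[ℝ] V) : Prop :=
  B.IsPos γ ∧ w' = sref γ * w ∧ B.len w' = B.len w + 1

/-- The Bruhat order on `W`: the reflexive–transitive closure of the covering
relations. -/
def bruhatLE : (V ≃ₗᵢ[ℝ] V) → (V ≃ₗᵢ[ℝ] V) → Prop :=
  Relation.ReflTransGen fun w w' => ∃ γ, B.BStep γ w w'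

/-- `x` is an element of `W` with `x(β) = α` of the minimal possible length
`|L(α) − L(β)|` (this is the element `x_{αβ}` when it exists). -/
def MinTake (h β α : V) (x : V ≃ₗᵢ[ℝ] V) : Prop :=
  x ∈ R.Weyl ∧ x β = α ∧ (B.len x : ℝ) = |B.level h α - B.level h β|

/-- `g` is a reduced expression of `x` as a product of simple reflections. -/
def IsReducedWord {n : ℕ} (g : Fin n → V) (x : V ≃ₗᵢ[ℝ] V) : Prop :=
  (∀ i, g i ∈ B.Δ) ∧ x = (List.ofFn fun i => sref (g i)).prod ∧ n = B.len x

/-- The depth of a positive root `β`: the minimal integer `k` such that there is an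
element `w` of `W` of length `k` with `w(β) < 0`. -/
def depth (β : V) : ℕ := sInf {n | ∃ w ∈ R.Weyl, B.len w = n ∧ B.IsNeg (w β)}

end Base

/-!
Short roots have `⟪β, β⟫ = 1`: non-orthogonal roots of different lengths have squared-length
ratio `2` or `3`, and irreducibility makes every root non-orthogonal to roots of each length.
If a positive short root `β` is not simple, then `⟨β, α∨⟩ = 1` for a simple root `α` with
`⟪β, α⟫ > 0`, so `β' = s_α β = β - α` is a positive short root of height `ht β - 1` and
`s_β = s_α s_β' s_α`. Both `s_β' α` and `s_α s_β' α` have the form `a β + b α` with `a > 0`,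
hence are positive, so each of the two multiplications by `s_α` adds exactly one inversion
and one letter. Since a simple reflection changes the number of inversions by at most one,
the length is at least the number of inversions, and induction on the height produces a word
for `s_β` of length `2 ht β - 1` with exactly that many inversions.
-/

section Reflection

variable {E : Type} [NormedAddCommGroup E] [InnerProductSpace ℝ E]

theorem sref_apply (α x : E) : sref α x = x - (2 * ⟪x, α⟫ / ⟪α, α⟫) • α := by
  rw [sref, Submodule.reflection_orthogonal_apply, Submodule.reflection_singleton_apply,
    real_inner_self_eq_norm_sq, real_inner_comm]
  simp only [RCLike.ofReal_real_eq_id, id_eq]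
  module

theorem sref_sref (α x : E) : sref α (sref α x) = x := Submodule.reflection_reflection _ x

theorem sref_inv (α : E) : (sref α)⁻¹ = sref α := Submodule.reflection_inv

theorem sref_self {α : E} (hα : α ≠ 0) : sref α α = -α := by
  rw [sref_apply, mul_div_assoc, div_self (inner_self_ne_zero.2 hα)]
  module

theorem sref_map (u : E ≃ₗᵢ[ℝ] E) (α : E) : sref (u α) = u * sref α * u⁻¹ := by
  ext x
  have h : ⟪x, u α⟫ = ⟪u⁻¹ x, α⟫ := by
    rw [← u.inner_map_map (u⁻¹ x), LinearIsometryEquiv.coe_inv, u.apply_symm_apply]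
  rw [sref_apply, u.inner_map_map, h, LinearIsometryEquiv.coe_mul, LinearIsometryEquiv.coe_mul,
    Function.comp_apply, Function.comp_apply, sref_apply, map_sub, map_smul,
    LinearIsometryEquiv.coe_inv, u.apply_symm_apply]

theorem sref_sref_apply (α β : E) : sref (sref α β) = sref α * sref β * sref α := by
  rw [sref_map, sref_inv]

end Reflection

namespace NRootSystem

variable {R : NRootSystem V}

theorem ne_zero_of_mem {α : V} (hα : α ∈ R.Φ) : α ≠ 0 :=
  ne_of_mem_of_not_mem hα R.zero_not_mem

theorem inner_self_pos {α : V} (hα : α ∈ R.Φ) : 0 < ⟪α, α⟫ :=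
  one_pos.trans_le (R.norm_one_le α hα)

theorem neg_mem {α : V} (hα : α ∈ R.Φ) : -α ∈ R.Φ := by
  simpa [sref_self (ne_zero_of_mem hα)] using R.reflect_mem α hα α hα

theorem neg_mem_iff {α : V} : -α ∈ R.Φ ↔ α ∈ R.Φ :=
  ⟨fun h => neg_neg α ▸ neg_mem h, neg_mem⟩

theorem mem_of_sref_mem {α x : V} (hα : α ∈ R.Φ) (h : sref α x ∈ R.Φ) : x ∈ R.Φ :=
  sref_sref α x ▸ R.reflect_mem α hα _ h

theorem exists_inner_self_eq_r : ∃ ε ∈ R.Φ, ⟪ε, ε⟫ = R.r := by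
  obtain ⟨ε, hε, h⟩ := Finset.exists_mem_eq_sup' R.nonempty fun α : V => ⟪α, α⟫
  exact ⟨ε, hε, h.symm⟩

theorem inner_mul_inner_lt {α β : V} (hα : α ∈ R.Φ) (hβ : β ∈ R.Φ) (h₁ : β ≠ α)
    (h₂ : β ≠ -α) : ⟪β, α⟫ * ⟪β, α⟫ < ⟪α, α⟫ * ⟪β, β⟫ := by
  refine (mul_comm ⟪α, α⟫ _ ▸ real_inner_mul_inner_self_le β α).lt_of_ne fun h => ?_
  obtain ⟨r, -, rfl⟩ := (norm_inner_eq_norm_iff (𝕜 := ℝ) (ne_zero_of_mem hα)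
    (ne_zero_of_mem hβ)).1 (by
      rw [Real.norm_eq_abs, ← sq_eq_sq₀ (abs_nonneg _) (by positivity), sq_abs, mul_pow,
        ← real_inner_self_eq_norm_sq, ← real_inner_self_eq_norm_sq, real_inner_comm]
      linarith)
  rcases R.reduced α hα r hβ with rfl | rfl
  · exact h₁ (one_smul ℝ α)
  · exact h₂ (neg_one_smul ℝ α)

theorem two_mul_inner_eq_or {x y : V} (hx : x ∈ R.Φ) (hy : y ∈ R.Φ) (h₁ : x ≠ y)
    (h₂ : x ≠ -y) (hxy : ⟪x, y⟫ ≠ 0) (hle : ⟪x, x⟫ ≤ ⟪y, y⟫) :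
    2 * ⟪x, y⟫ = ⟪y, y⟫ ∨ 2 * ⟪x, y⟫ = -⟪y, y⟫ := by
  obtain ⟨n, hn⟩ := R.pairing_int y hy x hx
  obtain ⟨m, hm⟩ := R.pairing_int x hx y hy
  rw [real_inner_comm] at hm
  have hcs := inner_mul_inner_lt hy hx h₁ h₂
  have ha := inner_self_pos hx
  have hb := inner_self_pos hy
  -- `n = ⟨x, y∨⟩` and `m = ⟨y, x∨⟩` satisfy `0 < n * m = 4 cos² < 4` and `n² ≤ m²`
  have hprod : (n * m : ℝ) * (⟪x, x⟫ * ⟪y, y⟫) = (2 * ⟪x, y⟫) ^ 2 := by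
    linear_combination (-(m * ⟪x, x⟫)) * hn + (-(2 * ⟪x, y⟫)) * hm
  have hnm_pos : 0 < n * m := by
    have h : (0 : ℝ) < n * m * (⟪x, x⟫ * ⟪y, y⟫) :=
      hprod ▸ lt_of_le_of_ne (sq_nonneg _) (pow_ne_zero 2 (mul_ne_zero two_ne_zero hxy)).symm
    have : (0 : ℝ) < n * m := pos_of_mul_pos_left h (by positivity)
    exact_mod_cast this
  have hnm_lt : n * m < 4 := by
    have : (n * m : ℝ) < 4 :=
      lt_of_mul_lt_mul_right (by nlinarith [real_inner_comm x y])
        (by positivity : 0 ≤ ⟪x, x⟫ * ⟪y, y⟫)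
    exact_mod_cast this
  have hsq : n ^ 2 ≤ m ^ 2 := by
    have h : (n : ℝ) ^ 2 * ⟪y, y⟫ ^ 2 = m ^ 2 * ⟪x, x⟫ ^ 2 := by
      rw [← mul_pow, ← mul_pow, ← hn, ← hm]
    have : (n : ℝ) ^ 2 * ⟪x, x⟫ ^ 2 ≤ m ^ 2 * ⟪x, x⟫ ^ 2 :=
      h ▸ mul_le_mul_of_nonneg_left (pow_le_pow_left₀ ha.le hle 2) (sq_nonneg _)
    exact_mod_cast le_of_mul_le_mul_right this (by positivity)
  have hn1 : n = 1 ∨ n = -1 := by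
    have : n ^ 2 * n ^ 2 ≤ 9 := by nlinarith [mul_le_mul_of_nonneg_left hsq (sq_nonneg n)]
    have : n ^ 2 ≤ 3 := by nlinarith
    have : -1 ≤ n ∧ n ≤ 1 := by constructor <;> nlinarith
    have : n ≠ 0 := by rintro rfl; simp at hnm_pos
    omega
  rcases hn1 with rfl | rfl
  · left; simpa using hn
  · right; simpa using hn

theorem inner_self_bounds_of_lt {x y : V} (hx : x ∈ R.Φ) (hy : y ∈ R.Φ) (hxy : ⟪x, y⟫ ≠ 0)
    (hlt : ⟪x, x⟫ < ⟪y, y⟫) : 2 * ⟪x, x⟫ ≤ ⟪y, y⟫ ∧ ⟪y, y⟫ ≤ 3 * ⟪x, x⟫ := by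
  have h₁ : x ≠ y := by rintro rfl; exact hlt.false
  have h₂ : x ≠ -y := by rintro rfl; rw [inner_neg_neg] at hlt; exact hlt.false
  obtain ⟨m, hm⟩ := R.pairing_int x hx y hy
  rw [real_inner_comm] at hm
  have hpm := two_mul_inner_eq_or hx hy h₁ h₂ hxy hlt.le
  obtain ⟨k, hk⟩ : ∃ k : ℤ, ⟪y, y⟫ = k * ⟪x, x⟫ := by
    rcases hpm with h | h
    · exact ⟨m, by linarith⟩
    · exact ⟨-m, by push_cast; linarith⟩
  have hcs := inner_mul_inner_lt hy hx h₁ h₂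
  have ha := inner_self_pos hx
  have hk₁ : 1 < k := by
    have : (1 : ℝ) < k := lt_of_mul_lt_mul_right (by linarith) ha.le
    exact_mod_cast this
  have hk₃ : k < 4 := by
    -- `(2 ⟪x, y⟫)² = ⟪y, y⟫²` and Cauchy–Schwarz give `⟪y, y⟫ < 4 ⟪x, x⟫`
    have hsq : (2 * ⟪x, y⟫) ^ 2 = ⟪y, y⟫ ^ 2 := sq_eq_sq_iff_eq_or_eq_neg.2 hpm
    have : (k : ℝ) < 4 := lt_of_mul_lt_mul_right (by nlinarith [real_inner_comm x y]) ha.le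
    exact_mod_cast this
  have hk' : (2 : ℝ) ≤ k ∧ (k : ℝ) ≤ 3 :=
    ⟨by exact_mod_cast hk₁, by exact_mod_cast (by omega : k ≤ 3)⟩
  rw [hk]
  constructor <;> nlinarith

theorem exists_inner_ne_zero {δ ε : V} (hδ : δ ∈ R.Φ) (hε : ε ∈ R.Φ) :
    ∃ x ∈ R.Φ, ⟪x, x⟫ = ⟪ε, ε⟫ ∧ ⟪δ, x⟫ ≠ 0 := by
  set O := R.Φ.filter fun x => ⟪x, x⟫ = ⟪ε, ε⟫
  set U := Submodule.span ℝ (O : Set V)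
  have hO : ∀ {x}, x ∈ O ↔ x ∈ R.Φ ∧ ⟪x, x⟫ = ⟪ε, ε⟫ := Finset.mem_filter
  have orth : ∀ v, (∀ x ∈ O, ⟪v, x⟫ = 0) → ∀ u ∈ U, ⟪v, u⟫ = 0 := fun v hv u hu =>
    Submodule.mem_orthogonal_singleton_iff_inner_right.1 <| Submodule.span_le.2
      (fun x hx => Submodule.mem_orthogonal_singleton_iff_inner_right.2 (hv x hx)) hu
  -- irreducibility forces every root into `U`
  have hΦU : ∀ γ ∈ R.Φ, γ ∈ U := by
    intro γ hγ
    by_contra hγU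
    obtain ⟨a, ha, b, hb, hab⟩ := R.irreducible (R.Φ.filter (· ∈ U)) (Finset.filter_subset _ _)
      ⟨ε, Finset.mem_filter.2 ⟨hε, Submodule.subset_span (hO.2 ⟨hε, rfl⟩)⟩⟩
      ⟨γ, Finset.mem_sdiff.2 ⟨hγ, fun h => hγU (Finset.mem_filter.1 h).2⟩⟩
    rw [Finset.mem_filter] at ha
    rw [Finset.mem_sdiff, Finset.mem_filter, not_and] at hb
    obtain ⟨x, hxO, hxb⟩ : ∃ x ∈ O, ⟪b, x⟫ ≠ 0 := by
      by_contra! h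
      exact hab (by rw [real_inner_comm]; exact orth b h a ha.2)
    -- `x - s_b x` is a nonzero multiple of `b`
    have hsx : sref b x ∈ O := hO.2 ⟨R.reflect_mem b hb.1 x (hO.1 hxO).1,
      by rw [LinearIsometryEquiv.inner_map_map]; exact (hO.1 hxO).2⟩
    have hb' : b = (⟪b, b⟫ / (2 * ⟪x, b⟫)) • (x - sref b x) := by
      have : ⟪x, b⟫ ≠ 0 := by rwa [real_inner_comm]
      have := inner_self_pos hb.1
      rw [sref_apply, sub_sub_cancel, smul_smul, div_mul_div_comm, mul_comm,
        div_self (by positivity), one_smul]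
    exact hb.2 hb.1 (hb' ▸ U.smul_mem _
      (U.sub_mem (Submodule.subset_span hxO) (Submodule.subset_span hsx)))
  by_contra! h
  exact (inner_self_pos hδ).ne' (orth δ (fun x hx => h x (hO.1 hx).1 (hO.1 hx).2) δ (hΦU δ hδ))

theorem IsShort.inner_self_eq_one {γ : V} (hγ : R.IsShort γ) : ⟪γ, γ⟫ = 1 := by
  obtain ⟨hγ, hlt⟩ := hγ
  obtain ⟨ε₁, hε₁, h₁⟩ := R.exists_norm_one
  obtain ⟨εᵣ, hεᵣ, hᵣ⟩ := exists_inner_self_eq_r (R := R)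
  refine ((R.norm_one_le γ hγ).eq_or_lt.resolve_right fun h1γ => ?_).symm
  -- `1 < ⟪γ, γ⟫ < r` would give `4 ≤ 2 ⟪γ, γ⟫ ≤ r`, while also `r ≤ 3`
  obtain ⟨x, hx, hxx, hγx⟩ := exists_inner_ne_zero hγ hε₁
  obtain ⟨y, hy, hyy, hγy⟩ := exists_inner_ne_zero hγ hεᵣ
  obtain ⟨z, hz, hzz, hεz⟩ := exists_inner_ne_zero hεᵣ hε₁
  have hxγ := (inner_self_bounds_of_lt hx hγ (by rwa [real_inner_comm]) (by rwa [hxx, h₁])).1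
  have hγy := (inner_self_bounds_of_lt hγ hy hγy (by rwa [hyy, hᵣ])).1
  have hzε := (inner_self_bounds_of_lt hz hεᵣ (by rwa [real_inner_comm])
    (by rw [hzz, h₁, hᵣ]; linarith)).2
  rw [hxx, h₁] at hxγ
  rw [hyy, hᵣ] at hγy
  rw [hzz, h₁, hᵣ] at hzε
  linarith

end NRootSystem

namespace Base

open NRootSystem

variable {R : NRootSystem V} {B : Base R}

theorem coeff_eq_of_eq_sum {γ : V} (hγ : γ ∈ R.Φ) {c : V → ℝ} (h : γ = ∑ α ∈ B.Δ, c α • α)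
    {α : V} (hα : α ∈ B.Δ) : (B.coeff γ α : ℝ) = c α :=
  B.indep.eq_coords_of_eq (f := fun a => (B.coeff γ a : ℝ)) (g := fun a => c a) (by
    rw [Finset.sum_coe_sort B.Δ fun a => (B.coeff γ a : ℝ) • a,
      Finset.sum_coe_sort B.Δ fun a => c a • a, ← B.coeff_spec γ hγ, ← h]) ⟨α, hα⟩

theorem coeff_smul_add_smul {x y : V} (hx : x ∈ R.Φ) (hy : y ∈ R.Φ) (a b : ℝ)
    (h : a • x + b • y ∈ R.Φ) {α : V} (hα : α ∈ B.Δ) :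
    (B.coeff (a • x + b • y) α : ℝ) = a * B.coeff x α + b * B.coeff y α :=
  coeff_eq_of_eq_sum h (c := fun α => a * B.coeff x α + b * B.coeff y α) (by
    conv_lhs => rw [B.coeff_spec x hx, B.coeff_spec y hy]
    simp only [Finset.smul_sum, smul_smul, ← Finset.sum_add_distrib, add_smul]) hα

theorem coeff_neg {γ : V} (hγ : γ ∈ R.Φ) {α : V} (hα : α ∈ B.Δ) :
    B.coeff (-γ) α = -B.coeff γ α := by
  have := coeff_eq_of_eq_sum (neg_mem hγ) (c := fun α => -(B.coeff γ α : ℝ)) (by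
    conv_lhs => rw [B.coeff_spec γ hγ]
    simp only [neg_smul, Finset.sum_neg_distrib]) hα
  exact_mod_cast this

theorem coeff_of_mem_Δ {α α' : V} (hα : α ∈ B.Δ) (hα' : α' ∈ B.Δ) :
    B.coeff α α' = if α' = α then 1 else 0 := by
  have := coeff_eq_of_eq_sum (B.subset hα) (c := fun x => if x = α then 1 else 0) (by
    simp only [ite_smul, one_smul, zero_smul, Finset.sum_ite_eq', hα, if_true]) hα'
  split_ifs at this ⊢ <;> exact_mod_cast this

theorem isPos_or_isNeg {γ : V} (hγ : γ ∈ R.Φ) : B.IsPos γ ∨ B.IsNeg γ :=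
  (B.coeff_sign γ hγ).imp (⟨hγ, ·⟩) (⟨hγ, ·⟩)

theorem IsPos.not_isNeg {γ : V} (h : B.IsPos γ) : ¬B.IsNeg γ := fun hn =>
  ne_zero_of_mem h.1 <| by
    rw [B.coeff_spec γ h.1]
    exact Finset.sum_eq_zero fun α hα => by rw [le_antisymm (hn.2 α hα) (h.2 α hα)]; simp

theorem isNeg_neg_iff {γ : V} : B.IsNeg (-γ) ↔ B.IsPos γ := by
  unfold IsNeg IsPos
  rw [NRootSystem.neg_mem_iff]
  exact and_congr_right fun hγ => forall₂_congr fun α hα => by rw [coeff_neg hγ hα, neg_nonpos]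

theorem isPos_neg_iff {γ : V} : B.IsPos (-γ) ↔ B.IsNeg γ := by
  rw [← isNeg_neg_iff, neg_neg]

theorem isPos_of_mem_Δ {α : V} (hα : α ∈ B.Δ) : B.IsPos α :=
  ⟨B.subset hα, fun α' hα' => by rw [coeff_of_mem_Δ hα hα']; split_ifs <;> norm_num⟩

theorem isPos_of_coeff_pos {γ α : V} (hγ : γ ∈ R.Φ) (hα : α ∈ B.Δ) (h : 0 < B.coeff γ α) :
    B.IsPos γ :=
  (isPos_or_isNeg hγ).resolve_right fun hn => (hn.2 α hα).not_gt h

theorem exists_coeff_pos_of_ne {γ α : V} (hγ : B.IsPos γ) (hα : α ∈ B.Δ) (hne : γ ≠ α) :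
    ∃ α' ∈ B.Δ, α' ≠ α ∧ 0 < B.coeff γ α' := by
  by_contra! h
  have hγα : γ = (B.coeff γ α : ℝ) • α := by
    conv_lhs => rw [B.coeff_spec γ hγ.1]
    refine Finset.sum_eq_single_of_mem α hα fun α' hα' hne' => ?_
    rw [le_antisymm (h α' hα' hne') (hγ.2 α' hα'), Int.cast_zero, zero_smul]
  rcases R.reduced α (B.subset hα) _ (hγα ▸ hγ.1) with h₁ | h₁
  · exact hne (by rw [hγα, h₁, one_smul])
  · have : B.coeff γ α = -1 := by exact_mod_cast h₁
    exact absurd (hγ.2 α hα) (by omega)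

theorem isPos_smul_add_smul {β α : V} (hβ : B.IsPos β) (hα : α ∈ B.Δ) (hne : β ≠ α) {a b : ℝ}
    (ha : 0 < a) (h : a • β + b • α ∈ R.Φ) : B.IsPos (a • β + b • α) := by
  obtain ⟨α', hα', hne', hpos⟩ := exists_coeff_pos_of_ne hβ hα hne
  refine isPos_of_coeff_pos h hα' ?_
  have hcoeff := coeff_smul_add_smul hβ.1 (B.subset hα) a b h hα'
  rw [coeff_of_mem_Δ hα hα', if_neg hne', Int.cast_zero, mul_zero, add_zero] at hcoeff
  have : (0 : ℝ) < B.coeff (a • β + b • α) α' := by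
    rw [hcoeff]
    exact mul_pos ha (by exact_mod_cast hpos)
  exact_mod_cast this

theorem isPos_sref_of_ne {γ α : V} (hα : α ∈ B.Δ) (hγ : B.IsPos γ) (hne : γ ≠ α) :
    B.IsPos (sref α γ) := by
  have h := R.reflect_mem α (B.subset hα) γ hγ.1
  rw [sref_apply, sub_eq_add_neg, ← neg_smul, ← one_smul ℝ γ] at h ⊢
  exact isPos_smul_add_smul hγ hα hne one_pos h

theorem isNeg_sref_iff {α δ : V} (hα : α ∈ B.Δ) :
    B.IsNeg (sref α δ) ↔ δ = α ∨ (B.IsNeg δ ∧ δ ≠ -α) := by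
  have hαΦ := B.subset hα
  constructor
  · intro h
    refine or_iff_not_imp_left.2 fun hδα => ⟨(isPos_or_isNeg (mem_of_sref_mem hαΦ h.1)).resolve_left
      fun hp => (isPos_sref_of_ne hα hp hδα).not_isNeg h, ?_⟩
    rintro rfl
    rw [map_neg, sref_self (ne_zero_of_mem hαΦ), neg_neg] at h
    exact (isPos_of_mem_Δ hα).not_isNeg h
  · rintro (rfl | ⟨hδ, hne⟩)
    · rw [sref_self (ne_zero_of_mem hαΦ)]
      exact isNeg_neg_iff.2 (isPos_of_mem_Δ hα)
    · have := isPos_sref_of_ne hα (isPos_neg_iff.2 hδ) fun h => hne (by rw [← h, neg_neg])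
      rwa [map_neg, isPos_neg_iff] at this

theorem one_le_ht {γ : V} (hγ : B.IsPos γ) : 1 ≤ B.ht γ := by
  obtain ⟨α, hα, hpos⟩ : ∃ α ∈ B.Δ, 0 < B.coeff γ α := by
    by_contra! h
    refine ne_zero_of_mem hγ.1 ?_
    rw [B.coeff_spec γ hγ.1]
    exact Finset.sum_eq_zero fun α hα => by rw [le_antisymm (h α hα) (hγ.2 α hα)]; simp
  exact hpos.trans_le (Finset.single_le_sum (fun a ha => hγ.2 a ha) hα)

theorem ht_of_mem_Δ {α : V} (hα : α ∈ B.Δ) : B.ht α = 1 := by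
  rw [ht, Finset.sum_congr rfl fun α' hα' => coeff_of_mem_Δ hα hα', Finset.sum_ite_eq', if_pos hα]

theorem ht_sub_of_mem_Δ {γ α : V} (hγ : γ ∈ R.Φ) (hα : α ∈ B.Δ) (h : γ - α ∈ R.Φ) :
    B.ht (γ - α) = B.ht γ - 1 := by
  have e : γ - α = (1 : ℝ) • γ + (-1 : ℝ) • α := by module
  have hcoeff : ∀ α' ∈ B.Δ, B.coeff (γ - α) α' = B.coeff γ α' - B.coeff α α' := fun α' hα' => by
    have := coeff_smul_add_smul hγ (B.subset hα) 1 (-1) (e ▸ h) hα'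
    rw [← e] at this
    exact_mod_cast (by linarith : (B.coeff (γ - α) α' : ℝ) = B.coeff γ α' - B.coeff α α')
  rw [ht, Finset.sum_congr rfl hcoeff, Finset.sum_sub_distrib, ← ht, ← ht, ht_of_mem_Δ hα]

variable (B) in
def inversions (w : V ≃ₗᵢ[ℝ] V) : Finset V :=
  R.Φ.filter fun γ => B.IsPos γ ∧ B.IsNeg (w γ)

theorem mem_inversions {w : V ≃ₗᵢ[ℝ] V} {γ : V} :
    γ ∈ B.inversions w ↔ B.IsPos γ ∧ B.IsNeg (w γ) := by
  rw [inversions, Finset.mem_filter]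
  exact ⟨fun h => h.2, fun h => ⟨h.1.1, h⟩⟩

theorem inversions_one : B.inversions 1 = ∅ :=
  Finset.eq_empty_of_forall_notMem fun _ hγ =>
    (mem_inversions.1 hγ).1.not_isNeg (mem_inversions.1 hγ).2

theorem inversions_sref_mul_subset {α : V} (hα : α ∈ B.Δ) (w : V ≃ₗᵢ[ℝ] V) :
    B.inversions (sref α * w) ⊆ insert (w⁻¹ α) (B.inversions w) := by
  intro γ hγ
  rw [mem_inversions, LinearIsometryEquiv.coe_mul, Function.comp_apply] at hγ
  rw [Finset.mem_insert, mem_inversions]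
  rcases (isNeg_sref_iff hα).1 hγ.2 with h | ⟨h, -⟩
  · exact Or.inl (by rw [← h, LinearIsometryEquiv.coe_inv, w.symm_apply_apply])
  · exact Or.inr ⟨hγ.1, h⟩

theorem inversions_sref_mul {α : V} (hα : α ∈ B.Δ) {w : V ≃ₗᵢ[ℝ] V} (h : B.IsPos (w⁻¹ α)) :
    B.inversions (sref α * w) = insert (w⁻¹ α) (B.inversions w) := by
  have hwα : w (w⁻¹ α) = α := by rw [LinearIsometryEquiv.coe_inv, w.apply_symm_apply]
  refine (inversions_sref_mul_subset hα w).antisymm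
    (Finset.insert_subset_iff.2 ⟨mem_inversions.2 ⟨h, ?_⟩, fun γ hγ => ?_⟩)
  · rw [LinearIsometryEquiv.coe_mul, Function.comp_apply, hwα,
      sref_self (ne_zero_of_mem (B.subset hα))]
    exact isNeg_neg_iff.2 (isPos_of_mem_Δ hα)
  · rw [mem_inversions] at hγ ⊢
    rw [LinearIsometryEquiv.coe_mul, Function.comp_apply]
    refine ⟨hγ.1, (isNeg_sref_iff hα).2 (Or.inr ⟨hγ.2, fun he => ?_⟩)⟩
    have : γ = -(w⁻¹ α) := w.injective (by rw [he, map_neg, hwα])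
    exact hγ.1.not_isNeg (this ▸ isNeg_neg_iff.2 h)

theorem card_inversions_sref_mul_le {α : V} (hα : α ∈ B.Δ) (w : V ≃ₗᵢ[ℝ] V) :
    (B.inversions (sref α * w)).card ≤ (B.inversions w).card + 1 :=
  (Finset.card_le_card (inversions_sref_mul_subset hα w)).trans (Finset.card_insert_le _ _)

theorem card_inversions_sref_mul {α : V} (hα : α ∈ B.Δ) {w : V ≃ₗᵢ[ℝ] V}
    (h : B.IsPos (w⁻¹ α)) : (B.inversions (sref α * w)).card = (B.inversions w).card + 1 := by
  rw [inversions_sref_mul hα h, Finset.card_insert_of_notMem]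
  intro hmem
  have := (mem_inversions.1 hmem).2
  rw [LinearIsometryEquiv.coe_inv, w.apply_symm_apply] at this
  exact (isPos_of_mem_Δ hα).not_isNeg this

theorem inversions_mul_sref {α : V} (hα : α ∈ B.Δ) {w : V ≃ₗᵢ[ℝ] V} (h : B.IsPos (w α)) :
    B.inversions (w * sref α) = insert α ((B.inversions w).image (sref α)) := by
  ext γ
  simp only [Finset.mem_insert, Finset.mem_image, mem_inversions, LinearIsometryEquiv.coe_mul,
    Function.comp_apply]
  constructor
  · rintro ⟨hγ, hwγ⟩
    exact or_iff_not_imp_left.2 fun hγα =>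
      ⟨sref α γ, ⟨isPos_sref_of_ne hα hγ hγα, hwγ⟩, sref_sref α γ⟩
  · rintro (rfl | ⟨δ, ⟨hδ, hwδ⟩, rfl⟩)
    · refine ⟨isPos_of_mem_Δ hα, ?_⟩
      rw [sref_self (ne_zero_of_mem (B.subset hα)), map_neg]
      exact isNeg_neg_iff.2 h
    · have hδα : δ ≠ α := by rintro rfl; exact h.not_isNeg hwδ
      exact ⟨isPos_sref_of_ne hα hδ hδα, by rwa [sref_sref]⟩

theorem card_inversions_mul_sref {α : V} (hα : α ∈ B.Δ) {w : V ≃ₗᵢ[ℝ] V} (h : B.IsPos (w α)) :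
    (B.inversions (w * sref α)).card = (B.inversions w).card + 1 := by
  rw [inversions_mul_sref hα h, Finset.card_insert_of_notMem,
    Finset.card_image_of_injective _ (sref α).injective]
  intro hmem
  obtain ⟨δ, hδ, he⟩ := Finset.mem_image.1 hmem
  have : δ = -α := by rw [← sref_sref α δ, he, sref_self (ne_zero_of_mem (B.subset hα))]
  exact (isPos_of_mem_Δ hα).not_isNeg (isPos_neg_iff.1 (this ▸ (mem_inversions.1 hδ).1))

theorem card_inversions_sref {α : V} (hα : α ∈ B.Δ) : (B.inversions (sref α)).card = 1 := by
  simpa [inversions_one] using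
    card_inversions_sref_mul hα (w := 1) (by simpa using isPos_of_mem_Δ hα)

theorem card_inversions_sref_mul_mul_sref {α : V} (hα : α ∈ B.Δ) {w : V ≃ₗᵢ[ℝ] V}
    (h₁ : B.IsPos (w α)) (h₂ : B.IsPos (sref α (w⁻¹ α))) :
    (B.inversions (sref α * w * sref α)).card = (B.inversions w).card + 2 := by
  rw [mul_assoc, card_inversions_sref_mul hα (by rwa [mul_inv_rev, sref_inv]),
    card_inversions_mul_sref hα h₁]

variable (B) in
def HasWord (w : V ≃ₗᵢ[ℝ] V) (n : ℕ) : Prop :=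
  ∃ g : Fin n → V, (∀ i, g i ∈ B.Δ) ∧ w = (List.ofFn fun i => sref (g i)).prod

theorem hasWord_sref {α : V} (hα : α ∈ B.Δ) : B.HasWord (sref α) 1 :=
  ⟨fun _ => α, fun _ => hα, by simp [List.ofFn_succ]⟩

theorem HasWord.mul {u w : V ≃ₗᵢ[ℝ] V} {m n : ℕ} (hu : B.HasWord u m) (hw : B.HasWord w n) :
    B.HasWord (u * w) (m + n) := by
  obtain ⟨g, hg, rfl⟩ := hu
  obtain ⟨g', hg', rfl⟩ := hw
  refine ⟨Fin.append g g', Fin.addCases (by simpa using hg) (by simpa using hg'), ?_⟩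
  simp only [List.ofFn_comp', List.ofFn_fin_append, List.map_append, List.prod_append]

theorem len_le {w : V ≃ₗᵢ[ℝ] V} {n : ℕ} (h : B.HasWord w n) : B.len w ≤ n :=
  Nat.sInf_le h

theorem card_inversions_le {w : V ≃ₗᵢ[ℝ] V} {n : ℕ} (h : B.HasWord w n) :
    (B.inversions w).card ≤ n := by
  induction n generalizing w with
  | zero =>
    obtain ⟨g, -, rfl⟩ := h
    simp [inversions_one]
  | succ n ih =>
    obtain ⟨g, hg, rfl⟩ := h
    rw [List.ofFn_succ, List.prod_cons]
    exact (card_inversions_sref_mul_le (hg 0) _).trans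
      (Nat.succ_le_succ (ih ⟨_, fun i => hg i.succ, rfl⟩))

theorem len_eq_of_card_inversions {w : V ≃ₗᵢ[ℝ] V} {n : ℕ} (hw : B.HasWord w n)
    (hcard : (B.inversions w).card = n) : B.len w = n :=
  (len_le hw).antisymm <| hcard ▸
    card_inversions_le (Nat.sInf_mem (⟨n, hw⟩ : {m | B.HasWord w m}.Nonempty))

theorem exists_two_mul_inner_eq {β : V} (hβ : B.IsPos β) (hβΔ : β ∉ B.Δ) (h1 : ⟪β, β⟫ = 1) :
    ∃ α ∈ B.Δ, 2 * ⟪β, α⟫ = ⟪α, α⟫ := by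
  obtain ⟨α, hα, hpos⟩ : ∃ α ∈ B.Δ, 0 < ⟪β, α⟫ := by
    by_contra! h
    have : ⟪β, β⟫ ≤ 0 := by
      nth_rw 2 [B.coeff_spec β hβ.1]
      rw [inner_sum]
      exact Finset.sum_nonpos fun α hα => by
        rw [real_inner_smul_right]
        exact mul_nonpos_of_nonneg_of_nonpos (by exact_mod_cast hβ.2 α hα) (h α hα)
    linarith
  have hαΦ := B.subset hα
  have hne : β ≠ α := fun h => hβΔ (h ▸ hα)
  have hne' : β ≠ -α := fun h =>
    (isPos_of_mem_Δ hα).not_isNeg (isPos_neg_iff.1 (h ▸ hβ))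
  refine ⟨α, hα, ?_⟩
  rcases two_mul_inner_eq_or hβ.1 hαΦ hne hne' hpos.ne' (h1 ▸ R.norm_one_le α hαΦ) with h | h
  · exact h
  · linarith [inner_self_pos hαΦ]

theorem exists_descent {β : V} (hβ : B.IsPos β) (hβΔ : β ∉ B.Δ) (h1 : ⟪β, β⟫ = 1) :
    ∃ α ∈ B.Δ, B.IsPos (sref α β) ∧ ⟪sref α β, sref α β⟫ = 1 ∧
      B.ht (sref α β) = B.ht β - 1 ∧ B.IsPos (sref (sref α β) α) ∧
      B.IsPos (sref α (sref (sref α β) α)) := by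
  obtain ⟨α, hα, hβα⟩ := exists_two_mul_inner_eq hβ hβΔ h1
  have hαΦ := B.subset hα
  have hne : β ≠ α := fun h => hβΔ (h ▸ hα)
  have ha : 0 < ⟪α, α⟫ := inner_self_pos hαΦ
  have hβ'Φ : sref α β ∈ R.Φ := R.reflect_mem α hαΦ β hβ.1
  have hβ' : sref α β = β - α := by rw [sref_apply, hβα, div_self ha.ne', one_smul]
  have hδΦ : sref (sref α β) α ∈ R.Φ := R.reflect_mem _ hβ'Φ α hαΦ
  have hδ : sref (sref α β) α = ⟪α, α⟫ • β + (1 - ⟪α, α⟫) • α := by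
    rw [sref_apply, LinearIsometryEquiv.inner_map_map, h1, div_one, hβ', inner_sub_right,
      real_inner_comm β α, show 2 * (⟪β, α⟫ - ⟪α, α⟫) = -⟪α, α⟫ by linarith]
    module
  have hε : sref α (sref (sref α β) α) = ⟪α, α⟫ • β + (-1 : ℝ) • α := by
    rw [hδ, map_add, map_smul, map_smul, hβ', sref_self (ne_zero_of_mem hαΦ)]
    module
  refine ⟨α, hα, isPos_sref_of_ne hα hβ hne, by rw [LinearIsometryEquiv.inner_map_map, h1],
    hβ' ▸ ht_sub_of_mem_Δ hβ.1 hα (hβ' ▸ hβ'Φ), ?_, ?_⟩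
  · rw [hδ] at hδΦ ⊢
    exact isPos_smul_add_smul hβ hα hne ha hδΦ
  · have hεΦ := R.reflect_mem α hαΦ _ hδΦ
    rw [hε] at hεΦ ⊢
    exact isPos_smul_add_smul hβ hα hne ha hεΦ

theorem exists_hasWord_sref {β : V} (hβ : B.IsPos β) (h1 : ⟪β, β⟫ = 1) :
    ∃ n : ℕ, B.HasWord (sref β) n ∧ (B.inversions (sref β)).card = n ∧
      (n : ℤ) = 2 * B.ht β - 1 := by
  obtain ⟨k, hk⟩ : ∃ k : ℕ, B.ht β = k := Int.eq_ofNat_of_zero_le (zero_le_one.trans (one_le_ht hβ))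
  induction k generalizing β with
  | zero => exact absurd (one_le_ht hβ) (by omega)
  | succ k ih =>
    by_cases hβΔ : β ∈ B.Δ
    · exact ⟨1, hasWord_sref hβΔ, card_inversions_sref hβΔ, by rw [ht_of_mem_Δ hβΔ]; norm_num⟩
    obtain ⟨α, hα, hpos, h1', hht, hδ, hε⟩ := exists_descent hβ hβΔ h1
    obtain ⟨n, hword, hcard, hn⟩ := ih hpos h1' (by rw [hht, hk]; push_cast; ring)
    have hconj : sref β = sref α * sref (sref α β) * sref α := by rw [← sref_sref_apply, sref_sref]
    refine ⟨1 + n + 1, hconj ▸ ((hasWord_sref hα).mul hword).mul (hasWord_sref hα), ?_, ?_⟩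
    · rw [hconj, card_inversions_sref_mul_mul_sref hα hδ (by rwa [sref_inv]), hcard]
      ring
    · push_cast
      omega

end Base

/-- for every positive short root `β`, the length of the reflection `s_β`
satisfies `l(s_β) = 2·ht(β) − 1`. -/
theorem len_sref_short (R : NRootSystem V) (B : Base R) {β : V}
    (hβ : R.IsShort β) (hβpos : B.IsPos β) :
    (B.len (sref β) : ℤ) = 2 * B.ht β - 1 := by
  obtain ⟨n, hword, hcard, hn⟩ := Base.exists_hasWord_sref hβpos hβ.inner_self_eq_one
  rw [Base.len_eq_of_card_inversions hword hcard, hn]
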